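/- arXiv:1102.0422 — 2 statements merged into one kernel-verified Lean document; each statement's English description precedes it below -/
import Mathlib

section
/- Let Γ be the 2-cocycle Γ(s,t) = ∏_{j≠n} p^{sₙ tⱼ} on ℤⁿ with p^m = q². Let a, b ∈ ℤⁿ each be of the form content(x_{α,ij}) = ε(z_{α,j}) - ε(w_{α,i}) or content(y_α) = ∑_{ν∈M_α} ε(ν), with 1 ≤ ᾱ ≤ n-m. Then Γ(a,b) = 1, except: Γ(content(x_{α,i₁,n-m-ᾱ+1}), content(x_{α,i₂,n-m-ᾱ+1})) = p⁻¹ and Γ(content(x_{α,i,n-m-ᾱ+1}), content(y_α)) = q², for any i, i₁, i₂ ∈ {1,…,m}. -/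
/-! Since `Γ(s, t) = p ^ (sₙ · (t₁ + ⋯ + tₙ₋₁))`, only the `n`-th coordinate of the first
argument and the coordinate sum off `n` of the second matter. For `1 ≤ ᾱ ≤ n - m` the indices
`w_{α,i} = ᾱ + m - i` and `M_α = {ᾱ, …, ᾱ + m - 1}` stay inside `{1, …, n - 1}`, while
`z_{α,j}` equals `n` exactly when `j = n - m - ᾱ + 1`. Hence `content(y_α)` has `n`-th
coordinate `0` and sum `m`, and `content(x_{α,ij})` has `n`-th coordinate `δ` and sum off `n`
equal to `-δ`, where `δ = [j = n - m - ᾱ + 1]`; then `p ^ m = q ^ 2` gives the values. -/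

open Finset

def cycRep (n : ℕ) (k : ℤ) : ℤ := (k - 1) % n + 1

theorem cycRep_add_self (n : ℕ) (k : ℤ) : cycRep n (k + n) = cycRep n k := by
  rw [cycRep, cycRep, add_sub_right_comm, Int.add_emod_right]

theorem cycRep_of_le {n : ℕ} {k : ℤ} (h1 : 1 ≤ k) (h2 : k ≤ n) : cycRep n k = k := by
  rw [cycRep, Int.emod_eq_of_lt (by omega) (by omega), sub_add_cancel]

theorem cycRep_of_lt {n : ℕ} {k : ℤ} (h1 : n < k) (h2 : k ≤ 2 * n) : cycRep n k = k - n := by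
  rw [← cycRep_of_le (n := n) (k := k - n) (by omega) (by omega), ← cycRep_add_self n (k - n),
    sub_add_cancel]

theorem cycRep_cycRep_add (n : ℕ) (α d : ℤ) : cycRep n (cycRep n α + d) = cycRep n (α + d) := by
  unfold cycRep
  rw [add_sub_right_comm, add_sub_cancel_right, Int.emod_add_emod, sub_add_eq_add_sub]

theorem cycRep_add_of_le {n : ℕ} {α d : ℤ} (h1 : 1 ≤ cycRep n α + d) (h2 : cycRep n α + d ≤ n) :
    cycRep n (α + d) = cycRep n α + d := by
  rw [← cycRep_cycRep_add, cycRep_of_le h1 h2]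

theorem cycRep_add_of_lt {n : ℕ} {α d : ℤ} (h1 : n < cycRep n α + d)
    (h2 : cycRep n α + d ≤ 2 * n) : cycRep n (α + d) = cycRep n α + d - n := by
  rw [← cycRep_cycRep_add, cycRep_of_lt h1 h2]

theorem prod_zpow_mul {ι G : Type*} [CommGroupWithZero G] {p : G} (hp : p ≠ 0) (c : ℤ)
    (t : ι → ℤ) (s : Finset ι) : ∏ j ∈ s, p ^ (c * t j) = p ^ (c * ∑ j ∈ s, t j) := by
  classical
  induction s using Finset.induction_on with
  | empty => simp
  | insert x s hx ih => rw [prod_insert hx, sum_insert hx, ih, mul_add, zpow_add₀ hp]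

def contentX (n m : ℕ) (α : ℤ) (i j : ℕ) (k : ℤ) : ℤ :=
  (if k = cycRep n (j + α + m - 1) then 1 else 0) - (if k = cycRep n (α + m - i) then 1 else 0)

def contentY (n m : ℕ) (α : ℤ) (k : ℤ) : ℤ :=
  if k ∈ (range m).image (fun t : ℕ => cycRep n (α + t)) then 1 else 0

noncomputable def cocycle {G : Type*} [CommGroupWithZero G] (p : G) (n : ℕ) (s t : ℤ → ℤ) : G :=
  ∏ j ∈ Icc (1 : ℤ) (n - 1), p ^ (s n * t j)

theorem cocycle_eq_zpow {G : Type*} [CommGroupWithZero G] {p : G} (hp : p ≠ 0) (n : ℕ) (s t : ℤ → ℤ) :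
    cocycle p n s t = p ^ (s n * ∑ j ∈ Icc (1 : ℤ) (n - 1), t j) :=
  prod_zpow_mul hp _ _ _

section Generators

variable {n m : ℕ} {α : ℤ}

theorem cycRep_add_sub (hα : 1 ≤ cycRep n α) (hαm : cycRep n α + m ≤ n) {i : ℕ} (hi : 1 ≤ i)
    (him : i ≤ m) : cycRep n (α + m - i) = cycRep n α + m - i := by
  rw [add_sub_assoc, cycRep_add_of_le (by omega) (by omega), add_sub_assoc]

theorem cycRep_z_mem_Icc_and_eq_iff (hα : 1 ≤ cycRep n α) (hαm : cycRep n α + m ≤ n) {j : ℕ}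
    (hj : 1 ≤ j) (hjn : j ≤ n - m) :
    cycRep n (j + α + m - 1) ∈ Icc 1 (n : ℤ) ∧
      (cycRep n (j + α + m - 1) = n ↔ (j : ℤ) = n - m - cycRep n α + 1) := by
  rw [mem_Icc, show (j : ℤ) + α + m - 1 = α + (j + m - 1) by ring]
  rcases le_or_gt (cycRep n α + (j + m - 1)) n with h | h
  · rw [cycRep_add_of_le (by omega) h]; omega
  · rw [cycRep_add_of_lt h (by omega)]; omega

theorem contentX_apply_self (hα : 1 ≤ cycRep n α) (hαm : cycRep n α + m ≤ n) {i j : ℕ}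
    (hi : 1 ≤ i) (him : i ≤ m) (hj : 1 ≤ j) (hjn : j ≤ n - m) :
    contentX n m α i j n = if (j : ℤ) = n - m - cycRep n α + 1 then 1 else 0 := by
  have hw := cycRep_add_sub hα hαm hi him
  have hz := (cycRep_z_mem_Icc_and_eq_iff hα hαm hj hjn).2
  rw [contentX, if_neg (show (n : ℤ) ≠ cycRep n (α + m - i) by omega), sub_zero]
  exact if_congr (eq_comm.trans hz) rfl rfl

theorem sum_contentX (hα : 1 ≤ cycRep n α) (hαm : cycRep n α + m ≤ n) {i j : ℕ}
    (hi : 1 ≤ i) (him : i ≤ m) (hj : 1 ≤ j) (hjn : j ≤ n - m) :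
    ∑ k ∈ Icc (1 : ℤ) (n - 1), contentX n m α i j k =
      if (j : ℤ) = n - m - cycRep n α + 1 then -1 else 0 := by
  have hw := cycRep_add_sub hα hαm hi him
  obtain ⟨hz, hzn⟩ := cycRep_z_mem_Icc_and_eq_iff hα hαm hj hjn
  rw [mem_Icc] at hz
  simp only [contentX, sum_sub_distrib, sum_ite_eq', mem_Icc]
  rw [if_pos (show 1 ≤ cycRep n (α + m - i) ∧ cycRep n (α + m - i) ≤ n - 1 by omega)]
  split_ifs <;> omega

theorem image_range_cycRep (hα : 1 ≤ cycRep n α) (hαm : cycRep n α + m ≤ n) :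
    (range m).image (fun t : ℕ => cycRep n (α + t)) = Ico (cycRep n α) (cycRep n α + m) := by
  ext k
  simp only [mem_image, mem_range, mem_Ico]
  constructor
  · rintro ⟨t, ht, rfl⟩
    rw [cycRep_add_of_le (by omega) (by omega)]
    omega
  · intro hk
    refine ⟨(k - cycRep n α).toNat, by omega, ?_⟩
    rw [cycRep_add_of_le (by omega) (by omega)]
    omega

theorem contentY_apply_self (hα : 1 ≤ cycRep n α) (hαm : cycRep n α + m ≤ n) :
    contentY n m α n = 0 := by
  rw [contentY, image_range_cycRep hα hαm, if_neg (by rw [mem_Ico]; omega)]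

theorem sum_contentY (hα : 1 ≤ cycRep n α) (hαm : cycRep n α + m ≤ n) :
    ∑ k ∈ Icc (1 : ℤ) (n - 1), contentY n m α k = m := by
  have hsub : Ico (cycRep n α) (cycRep n α + m) ⊆ Icc 1 (n - 1) := by
    intro k; simp only [mem_Ico, mem_Icc]; omega
  rw [sum_congr rfl fun k _ => by rw [contentY, image_range_cycRep hα hαm], sum_boole,
    filter_mem_eq_inter, inter_eq_right.mpr hsub, Int.card_Ico, add_sub_cancel_left,
    Int.toNat_natCast]

end Generators

theorem stmt10_general (𝕂 : Type*) [Field 𝕂] (p q : 𝕂) (hp : p ≠ 0)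
    (m n : ℕ) (α : ℤ)
    (hpq : p ^ m = q ^ 2)
    (rep : ℤ → ℤ) (hrep : ∀ k, rep k = (k - 1) % n + 1)
    (hα1 : 1 ≤ rep α) (hα2 : rep α ≤ (n : ℤ) - m)
    (Mα : Finset ℤ) (hMα : Mα = (Finset.range m).image fun t : ℕ => rep (α + t))
    (cx : ℕ → ℕ → ℤ → ℤ)
    (hcx : ∀ i j k, cx i j k =
      (if k = rep (j + α + m - 1) then 1 else 0) - (if k = rep (α + m - i) then 1 else 0))
    (cy : ℤ → ℤ) (hcy : ∀ k, cy k = if k ∈ Mα then 1 else 0)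
    (Γ : (ℤ → ℤ) → (ℤ → ℤ) → 𝕂)
    (hΓ : ∀ s t, Γ s t = ∏ j ∈ Finset.Icc (1 : ℤ) ((n : ℤ) - 1), p ^ (s n * t j)) :
    (∀ i₁ i₂ j₁ j₂ : ℕ, 1 ≤ i₁ → i₁ ≤ m → 1 ≤ i₂ → i₂ ≤ m →
      1 ≤ j₁ → j₁ ≤ n - m → 1 ≤ j₂ → j₂ ≤ n - m →
      Γ (cx i₁ j₁) (cx i₂ j₂) =
        if (j₁ : ℤ) = (n : ℤ) - m - rep α + 1 ∧ (j₂ : ℤ) = (n : ℤ) - m - rep α + 1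
        then p⁻¹ else 1) ∧
    (∀ i j : ℕ, 1 ≤ i → i ≤ m → 1 ≤ j → j ≤ n - m →
      Γ (cx i j) cy = if (j : ℤ) = (n : ℤ) - m - rep α + 1 then q ^ 2 else 1) ∧
    (∀ i j : ℕ, 1 ≤ i → i ≤ m → 1 ≤ j → j ≤ n - m → Γ cy (cx i j) = 1) ∧
    Γ cy cy = 1 := by
  obtain rfl : rep = cycRep n := funext hrep
  subst hMα
  obtain rfl : cx = contentX n m α := by funext i j k; exact hcx i j k
  obtain rfl : cy = contentY n m α := funext hcy
  obtain rfl : Γ = cocycle p n := by funext s t; exact hΓ s t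
  have hαm : cycRep n α + m ≤ n := by omega
  simp only [cocycle_eq_zpow hp, contentY_apply_self hα1 hαm, sum_contentY hα1 hαm, zero_mul,
    zpow_zero, implies_true, and_true]
  refine ⟨fun i₁ i₂ j₁ j₂ hi₁ hi₁m hi₂ hi₂m hj₁ hj₁n hj₂ hj₂n => ?_, fun i j hi him hj hjn => ?_⟩
  · rw [contentX_apply_self hα1 hαm hi₁ hi₁m hj₁ hj₁n, sum_contentX hα1 hαm hi₂ hi₂m hj₂ hj₂n]
    split_ifs <;> simp_all
  · rw [contentX_apply_self hα1 hαm hi him hj hjn, ← hpq]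
    split_ifs <;> simp

/-- Values of the cocycle Γ on the generators, case 1 ≤ ᾱ ≤ n-m. -/
theorem stmt10 (𝕂 : Type*) [Field 𝕂] (p q : 𝕂) (hp : p ≠ 0) (hq : q ≠ 0)
    (m n : ℕ) (hm : 1 ≤ m) (hmn : m < n) (α : ℤ)
    (hpq : p ^ m = q ^ 2)
    (rep : ℤ → ℤ) (hrep : ∀ k, rep k = (k - 1) % n + 1)
    (hα1 : 1 ≤ rep α) (hα2 : rep α ≤ (n : ℤ) - m)
    (Mα : Finset ℤ) (hMα : Mα = (Finset.range m).image fun t : ℕ => rep (α + t))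
    (cx : ℕ → ℕ → ℤ → ℤ)
    (hcx : ∀ i j k, cx i j k =
      (if k = rep (j + α + m - 1) then 1 else 0) - (if k = rep (α + m - i) then 1 else 0))
    (cy : ℤ → ℤ) (hcy : ∀ k, cy k = if k ∈ Mα then 1 else 0)
    (Γ : (ℤ → ℤ) → (ℤ → ℤ) → 𝕂)
    (hΓ : ∀ s t, Γ s t = ∏ j ∈ Finset.Icc (1 : ℤ) ((n : ℤ) - 1), p ^ (s n * t j)) :
    (∀ i₁ i₂ j₁ j₂ : ℕ, 1 ≤ i₁ → i₁ ≤ m → 1 ≤ i₂ → i₂ ≤ m →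
      1 ≤ j₁ → j₁ ≤ n - m → 1 ≤ j₂ → j₂ ≤ n - m →
      Γ (cx i₁ j₁) (cx i₂ j₂) =
        if (j₁ : ℤ) = (n : ℤ) - m - rep α + 1 ∧ (j₂ : ℤ) = (n : ℤ) - m - rep α + 1
        then p⁻¹ else 1) ∧
    (∀ i j : ℕ, 1 ≤ i → i ≤ m → 1 ≤ j → j ≤ n - m →
      Γ (cx i j) cy = if (j : ℤ) = (n : ℤ) - m - rep α + 1 then q ^ 2 else 1) ∧
    (∀ i j : ℕ, 1 ≤ i → i ≤ m → 1 ≤ j → j ≤ n - m → Γ cy (cx i j) = 1) ∧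
    Γ cy cy = 1 :=
  stmt10_general 𝕂 p q hp m n α hpq rep hrep hα1 hα2 Mα hMα cx hcx cy hcy Γ hΓ
end

section
/- Let K = {k₁ < ⋯ < k_t} ⊆ {1,…,m} and L = {l₁ < ⋯ < l_t} ⊆ {1,…,n-m}, and suppose n-m+1 ≤ ᾱ ≤ n. Let v = ∑_{ν=1}^{t} ( ε((l_ν+α+m-1)~) - ε((α+m-k_ν)~) ) ∈ ℤⁿ and u = ∑_{ν∈M_α} ε(ν). Then Γ(v, u) = p·q⁻² if ᾱ-(n-m) ∈ K, and Γ(v, u) = 1 otherwise, where Γ(s,t) = ∏_{j≠n} p^{sₙ tⱼ} and p^m = q². -/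
/-!
Only the coordinate `n` of `v` enters `Γ(v, u)`, and `Γ(v, u) = p ^ (vₙ · ∑_{j<n} uⱼ)`.
Since `n - m < ᾱ`, the window `M_α` of `m` consecutive residues wraps through `n`, so
`∑_{j<n} uⱼ = m - 1`. Reducing modulo `n`, the `L`-terms of `v` never hit `n`
(their representatives lie strictly between `n` and `2n`), while `(α + m - k)~ = n`
exactly for `k = ᾱ - (n - m)`; hence `vₙ = -[ᾱ - (n - m) ∈ K]` and
`p ^ (1 - m) = p · q⁻²` gives the value.
-/

open Finset

/-- The paper's `k̃`: the representative of `k` modulo `n` in `{1, …, n}`. -/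
def cyclicRep (n : ℕ) (k : ℤ) : ℤ := (k - 1) % n + 1

section cyclicRep

variable {n : ℕ}

theorem cyclicRep_eq_cyclicRep_iff {a b : ℤ} : cyclicRep n a = cyclicRep n b ↔ a ≡ b [ZMOD n] :=
  (add_left_inj 1).trans
    ⟨fun h => by simpa using Int.ModEq.add_right 1 (h : a - 1 ≡ b - 1 [ZMOD n]),
      fun h => h.sub_right 1⟩

theorem cyclicRep_modEq (k : ℤ) : cyclicRep n k ≡ k [ZMOD n] := by
  simpa [cyclicRep] using (Int.mod_modEq (k - 1) n).add_right 1

theorem cyclicRep_mem_Icc (hn : 0 < n) (k : ℤ) : cyclicRep n k ∈ Icc 1 (n : ℤ) := by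
  have := Int.emod_nonneg (k - 1) (by omega : (n : ℤ) ≠ 0)
  have := Int.emod_lt_of_pos (k - 1) (by omega : (0 : ℤ) < n)
  simp only [cyclicRep, mem_Icc]
  omega

theorem cyclicRep_of_mem_Icc {k : ℤ} (hk : k ∈ Icc 1 (n : ℤ)) : cyclicRep n k = k := by
  rw [mem_Icc] at hk
  rw [cyclicRep, Int.emod_eq_of_lt (by omega) (by omega), sub_add_cancel]

theorem cyclicRep_self : cyclicRep n n = n := by
  rcases n.eq_zero_or_pos with rfl | hn
  · simp [cyclicRep]
  · exact cyclicRep_of_mem_Icc (by simp; omega)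

theorem cyclicRep_cyclicRep_add (a s : ℤ) :
    cyclicRep n (cyclicRep n a + s) = cyclicRep n (a + s) :=
  cyclicRep_eq_cyclicRep_iff.2 ((cyclicRep_modEq a).add_right s)

/-- Of the integers in `(0, 2n)`, only `n` is a multiple of `n`. -/
theorem cyclicRep_eq_self_iff {y : ℤ} (hy0 : 0 < y) (hy : y < 2 * n) :
    cyclicRep n y = n ↔ y = n := by
  refine ⟨fun h => ?_, fun h => h ▸ cyclicRep_self (n := n)⟩
  rw [← cyclicRep_self (n := n), cyclicRep_eq_cyclicRep_iff, Int.modEq_iff_dvd] at h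
  have := Int.eq_zero_of_abs_lt_dvd h (abs_lt.2 ⟨by omega, by omega⟩)
  omega

end cyclicRep

theorem sum_boole_mem_Icc_sub_one {M : Finset ℤ} {N : ℤ} (hM : M ⊆ Icc 1 N) (hNM : N ∈ M) :
    ∑ j ∈ Icc 1 (N - 1), (if j ∈ M then 1 else 0 : ℤ) = M.card - 1 := by
  have : (Icc 1 (N - 1)).filter (· ∈ M) = M.erase N := by
    ext j
    have := @hM j
    simp only [mem_filter, mem_Icc, mem_erase] at this ⊢
    grind
  rw [sum_boole, this, card_erase_of_mem hNM, Nat.cast_sub (card_pos.2 ⟨N, hNM⟩)]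
  simp

section window

variable {m n : ℕ} {α : ℤ}

theorem card_image_cyclicRep_add_range (hmn : m ≤ n) :
    ((range m).image fun t : ℕ => cyclicRep n (α + t)).card = m := by
  rw [card_image_of_injOn, card_range]
  intro t₁ ht₁ t₂ ht₂ h
  rw [coe_range, Set.mem_Iio] at ht₁ ht₂
  have h := Int.natCast_modEq_iff.1 ((cyclicRep_eq_cyclicRep_iff.1 h).add_left_cancel' α)
  exact h.eq_of_lt_of_lt (by omega) (by omega)

theorem image_cyclicRep_add_range_subset (hn : 0 < n) :
    (range m).image (fun t : ℕ => cyclicRep n (α + t)) ⊆ Icc 1 (n : ℤ) := by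
  simp only [subset_iff, mem_image]
  rintro _ ⟨t, -, rfl⟩
  exact cyclicRep_mem_Icc hn _

theorem self_mem_image_cyclicRep_add_range (hα : (n : ℤ) - m < cyclicRep n α)
    (hα' : cyclicRep n α ≤ n) :
    (n : ℤ) ∈ (range m).image fun t : ℕ => cyclicRep n (α + t) := by
  refine mem_image.2 ⟨(n - cyclicRep n α).toNat, mem_range.2 (by omega), ?_⟩
  rw [← cyclicRep_cyclicRep_add, Int.toNat_of_nonneg (by omega), add_sub_cancel,
    cyclicRep_self]

theorem cyclicRep_add_ne_self (hα : (n : ℤ) - m < cyclicRep n α) (hα' : cyclicRep n α ≤ n)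
    {l : ℤ} (hl : l ∈ Icc 1 ((n : ℤ) - m)) : cyclicRep n (l + α + m - 1) ≠ n := by
  rw [mem_Icc] at hl
  rw [show l + α + m - 1 = α + (l + m - 1) by ring, ← cyclicRep_cyclicRep_add, Ne,
    cyclicRep_eq_self_iff (by omega) (by omega)]
  omega

theorem cyclicRep_sub_eq_self_iff (hmn : m ≤ n) (hα : (n : ℤ) - m < cyclicRep n α)
    (hα' : cyclicRep n α ≤ n) {k : ℤ} (hk : k ∈ Icc 1 (m : ℤ)) :
    cyclicRep n (α + m - k) = n ↔ k = cyclicRep n α - (n - m) := by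
  rw [mem_Icc] at hk
  rw [add_sub_assoc, ← cyclicRep_cyclicRep_add, cyclicRep_eq_self_iff (by omega) (by omega)]
  omega

end window

theorem prod_zpow_eq_zpow_sum {ι G : Type*} [CommGroupWithZero G] {a : G} (ha : a ≠ 0)
    (s : Finset ι) (f : ι → ℤ) : ∏ i ∈ s, a ^ f i = a ^ ∑ i ∈ s, f i := by
  induction s using Finset.cons_induction with
  | empty => simp
  | cons i s hi ih => rw [prod_cons, sum_cons, zpow_add₀ ha, ih]

theorem stmt13_general (𝕂 : Type*) [Field 𝕂] (p q : 𝕂) (hp : p ≠ 0)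
    (m n : ℕ) (hmn : m < n) (α : ℤ)
    (hpq : p ^ m = q ^ 2)
    (rep : ℤ → ℤ) (hrep : ∀ k, rep k = (k - 1) % n + 1)
    (hα1 : (n : ℤ) - m + 1 ≤ rep α) (hα2 : rep α ≤ n)
    (Mα : Finset ℤ) (hMα : Mα = (Finset.range m).image fun t : ℕ => rep (α + t))
    (K L : Finset ℤ) (hK : K ⊆ Finset.Icc 1 (m : ℤ))
    (hL : L ⊆ Finset.Icc 1 ((n : ℤ) - m))
    (v : ℤ → ℤ)
    (hv : ∀ x, v x = (∑ l ∈ L, if x = rep (l + α + m - 1) then 1 else 0)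
        - ∑ k ∈ K, if x = rep (α + m - k) then 1 else 0)
    (u : ℤ → ℤ) (hu : ∀ x, u x = if x ∈ Mα then 1 else 0)
    (Γ : (ℤ → ℤ) → (ℤ → ℤ) → 𝕂)
    (hΓ : ∀ s t, Γ s t = ∏ j ∈ Finset.Icc (1 : ℤ) ((n : ℤ) - 1), p ^ (s n * t j)) :
    Γ v u = if (rep α - ((n : ℤ) - m)) ∈ K then p * q ^ (-2 : ℤ) else 1 := by
  obtain rfl : rep = cyclicRep n := funext hrep
  subst hMα
  have hα : (n : ℤ) - m < cyclicRep n α := by omega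
  have hvn : v n = -if cyclicRep n α - (n - m) ∈ K then 1 else 0 := by
    rw [hv, sum_eq_zero fun l hl => if_neg (cyclicRep_add_ne_self hα hα2 (hL hl)).symm,
      sum_congr rfl fun k hk =>
        if_congr (eq_comm.trans (cyclicRep_sub_eq_self_iff hmn.le hα hα2 (hK hk))) rfl rfl,
      sum_ite_eq']
    simp
  have husum : ∑ j ∈ Icc 1 ((n : ℤ) - 1), u j = m - 1 := by
    simp only [hu]
    rw [sum_boole_mem_Icc_sub_one (image_cyclicRep_add_range_subset (by omega))
      (self_mem_image_cyclicRep_add_range hα hα2), card_image_cyclicRep_add_range hmn.le]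
  rw [hΓ, prod_zpow_eq_zpow_sum hp, ← mul_sum, husum, hvn]
  split_ifs
  · rw [show -1 * ((m : ℤ) - 1) = 1 - m by ring, zpow_sub₀ hp, zpow_one, zpow_natCast, hpq,
      zpow_neg, zpow_ofNat, div_eq_mul_inv]
  · simp

/-- Γ on general quantum minor contents, case n-m+1 ≤ ᾱ ≤ n. -/
theorem stmt13 (𝕂 : Type*) [Field 𝕂] (p q : 𝕂) (hp : p ≠ 0) (hq : q ≠ 0)
    (m n : ℕ) (hm : 1 ≤ m) (hmn : m < n) (α : ℤ)
    (hpq : p ^ m = q ^ 2)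
    (rep : ℤ → ℤ) (hrep : ∀ k, rep k = (k - 1) % n + 1)
    (hα1 : (n : ℤ) - m + 1 ≤ rep α) (hα2 : rep α ≤ n)
    (Mα : Finset ℤ) (hMα : Mα = (Finset.range m).image fun t : ℕ => rep (α + t))
    (K L : Finset ℤ) (hK : K ⊆ Finset.Icc 1 (m : ℤ))
    (hL : L ⊆ Finset.Icc 1 ((n : ℤ) - m)) (hKL : K.card = L.card)
    (v : ℤ → ℤ)
    (hv : ∀ x, v x = (∑ l ∈ L, if x = rep (l + α + m - 1) then 1 else 0)
        - ∑ k ∈ K, if x = rep (α + m - k) then 1 else 0)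
    (u : ℤ → ℤ) (hu : ∀ x, u x = if x ∈ Mα then 1 else 0)
    (Γ : (ℤ → ℤ) → (ℤ → ℤ) → 𝕂)
    (hΓ : ∀ s t, Γ s t = ∏ j ∈ Finset.Icc (1 : ℤ) ((n : ℤ) - 1), p ^ (s n * t j)) :
    Γ v u = if (rep α - ((n : ℤ) - m)) ∈ K then p * q ^ (-2 : ℤ) else 1 :=
  stmt13_general 𝕂 p q hp m n hmn α hpq rep hrep hα1 hα2 Mα hMα K L hK hL v hv u hu Γ hΓ
end
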